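/- Let $a > 0$ be a natural number and let $f(z) = z^a$ on $\mathbb{C}$ (a single variable). For a smooth compactly supported function $\xi$ on $\mathbb{C}$, the limit $\lim_{\epsilon \to 0^+} \int_{\{|z| > \epsilon\}} \frac{\xi(z)}{z^{a}} \, d\mu(z)$ exists, where $\mu$ is Lebesgue measure on $\mathbb{C} \cong \mathbb{R}^2$. -/

import Mathlib

open MeasureTheory Filter Complex Finset

noncomputable def om (a : ℕ) : ℂ := Complex.exp (Real.pi * I / a)

lemma om_ne_zero (a : ℕ) : om a ≠ 0 := Complex.exp_ne_zero _

lemma om_pow_two_a (a : ℕ) (ha : 0 < a) : om a ^ (2 * a) = 1 := by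
  rw [om, ← Complex.exp_nat_mul]
  have hA : (a : ℂ) ≠ 0 := Nat.cast_ne_zero.2 ha.ne'
  have : ((2 * a : ℕ) : ℂ) * (Real.pi * I / a) = 2 * Real.pi * I := by
    push_cast; field_simp
  rw [this, Complex.exp_two_pi_mul_I]

lemma om_zpow_ne_one (a : ℕ) (ha : 0 < a) (t : ℤ) (h1 : -(2 * a : ℤ) < t) (h2 : t < 0) :
    om a ^ t ≠ 1 := by
  intro h
  rw [om, ← Complex.exp_int_mul] at h
  obtain ⟨n, hn⟩ := Complex.exp_eq_one_iff.1 h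
  have hA : (a : ℂ) ≠ 0 := Nat.cast_ne_zero.2 ha.ne'
  have hpi : (Real.pi : ℂ) ≠ 0 := Complex.ofReal_ne_zero.2 Real.pi_ne_zero
  have ht : (t : ℂ) = 2 * n * a := by
    field_simp at hn
    have h2 : (t : ℂ) * (Real.pi * I) = (2 * n * a) * (Real.pi * I) := by linear_combination (Real.pi * I) * hn
    exact mul_right_cancel₀ (mul_ne_zero hpi I_ne_zero) h2
  have ht' : t = 2 * n * a := by exact_mod_cast ht
  rcases le_or_gt 0 n with hn0 | hn0
  · have : (0:ℤ) ≤ 2 * n * a := by positivity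
    omega
  · have : 2 * n * (a:ℤ) ≤ 2 * (-1) * a := by
      apply mul_le_mul_of_nonneg_right _ (by positivity)
      omega
    omega

lemma sum_om_zpow (a : ℕ) (ha : 0 < a) (t : ℤ) (h1 : -(2 * a : ℤ) < t) (h2 : t < 0) :
    ∑ k ∈ range (2 * a), (om a ^ k) ^ t = 0 := by
  have key : ∀ k : ℕ, (om a ^ k) ^ t = (om a ^ t) ^ k := by
    intro k
    rw [← zpow_natCast (om a) k, ← zpow_mul, mul_comm, zpow_mul, zpow_natCast]
  simp_rw [key]
  rw [geom_sum_eq (om_zpow_ne_one a ha t h1 h2)]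
  have : (om a ^ t) ^ (2 * a) = 1 := by
    rw [← zpow_natCast (om a ^ t), ← zpow_mul, mul_comm, zpow_mul, zpow_natCast,
      om_pow_two_a a ha, one_zpow]
  rw [this, sub_self, zero_div]

lemma binom_expand (u : ℂ) (hu : u ≠ 0) (p : ℕ) (c : ℂ) :
    (u + c * u⁻¹) ^ p = ∑ i ∈ range (p + 1), (p.choose i : ℂ) * c ^ (p - i) * u ^ (2 * (i:ℤ) - p) := by
  rw [add_pow]
  apply sum_congr rfl
  intro i hi
  have hip : i ≤ p := by simpa using Nat.lt_succ_iff.1 (mem_range.1 hi)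
  have key : u ^ i * u⁻¹ ^ (p - i) = u ^ (2 * (i:ℤ) - p) := by
    rw [inv_pow, ← zpow_natCast u i, ← zpow_natCast u (p - i), ← zpow_neg, ← zpow_add₀ hu]
    congr 1
    omega
  rw [mul_pow]
  calc u ^ i * (c ^ (p-i) * u⁻¹ ^ (p-i)) * (p.choose i : ℂ)
      = (p.choose i : ℂ) * c ^ (p-i) * (u ^ i * u⁻¹ ^ (p - i)) := by ring
    _ = _ := by rw [key]

lemma om_abs (a : ℕ) (ha : 0 < a) (k : ℕ) : ‖om a ^ k‖ = 1 := by
  rw [norm_pow]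
  have : om a = Complex.exp ((Real.pi / a : ℝ) * I) := by
    rw [om]; congr 1; push_cast; ring
  rw [this, Complex.norm_exp_ofReal_mul_I, one_pow]

lemma scalar_vanish (a p q : ℕ) (ha : 0 < a) (hpq : p + q < a) :
    ∑ k ∈ range (2 * a),
      ((om a ^ k) ^ a)⁻¹ * ((om a ^ k).re : ℂ) ^ p * ((om a ^ k).im : ℂ) ^ q = 0 := by
  have key : ∀ k ∈ range (2 * a),
      ((om a ^ k) ^ a)⁻¹ * ((om a ^ k).re : ℂ) ^ p * ((om a ^ k).im : ℂ) ^ q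
      = ∑ i ∈ range (p + 1), ∑ j ∈ range (q + 1),
          ((p.choose i : ℂ) * 1 ^ (p - i) * ((q.choose j : ℂ) * (-1 : ℂ) ^ (q - j)) /
            (2 ^ p * (2 * I) ^ q)) * (om a ^ k) ^ (2 * (i:ℤ) + 2 * j - p - q - a) := by
    intro k _
    set u := om a ^ k with hu_def
    have hu : u ≠ 0 := pow_ne_zero _ (om_ne_zero a)
    have habs : ‖u‖ = 1 := om_abs a ha k
    have hcu : (starRingEnd ℂ) u = u⁻¹ := by
      apply eq_inv_of_mul_eq_one_left
      rw [mul_comm, Complex.mul_conj, Complex.normSq_eq_norm_sq, habs]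
      norm_num
    have hre : ((u.re : ℝ) : ℂ) = (u + 1 * u⁻¹) / 2 := by
      have h := Complex.add_conj u
      rw [hcu] at h
      push_cast at h
      linear_combination -h/2
    have him : ((u.im : ℝ) : ℂ) = (u + (-1) * u⁻¹) / (2 * I) := by
      have h := Complex.sub_conj u
      rw [hcu] at h
      rw [eq_div_iff (by simp [Complex.I_ne_zero] : (2 * I : ℂ) ≠ 0)]
      push_cast at h
      linear_combination -h
    rw [hre, him, div_pow, div_pow, binom_expand u hu p 1, binom_expand u hu q (-1)]
    have shape : (u ^ a)⁻¹ *
        ((∑ i ∈ range (p+1), (p.choose i : ℂ) * 1 ^ (p - i) * u ^ (2 * (i:ℤ) - p)) / 2 ^ p) *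
        ((∑ j ∈ range (q+1), (q.choose j : ℂ) * (-1:ℂ) ^ (q - j) * u ^ (2 * (j:ℤ) - q)) / (2*I) ^ q)
        = ((∑ i ∈ range (p+1), (p.choose i : ℂ) * 1 ^ (p - i) * u ^ (2 * (i:ℤ) - p)) *
           (∑ j ∈ range (q+1), (q.choose j : ℂ) * (-1:ℂ) ^ (q - j) * u ^ (2 * (j:ℤ) - q))) *
          ((u ^ a)⁻¹ / (2 ^ p * (2*I) ^ q)) := by ring
    rw [shape, sum_mul_sum, Finset.sum_mul]
    apply sum_congr rfl
    intro i _
    rw [Finset.sum_mul]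
    apply sum_congr rfl
    intro j _
    have hz : u ^ (2 * (i:ℤ) - p) * u ^ (2 * (j:ℤ) - q) * (u ^ a)⁻¹
        = u ^ (2 * (i:ℤ) + 2 * j - p - q - a) := by
      rw [← zpow_natCast u a, ← zpow_neg, ← zpow_add₀ hu, ← zpow_add₀ hu]
      congr 1
      ring
    calc ((p.choose i : ℂ) * 1 ^ (p - i) * u ^ (2 * (i:ℤ) - p)) *
          ((q.choose j : ℂ) * (-1:ℂ) ^ (q - j) * u ^ (2 * (j:ℤ) - q)) * ((u ^ a)⁻¹ / (2 ^ p * (2*I) ^ q))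
        = ((p.choose i : ℂ) * 1 ^ (p - i) * ((q.choose j : ℂ) * (-1:ℂ) ^ (q - j)) / (2 ^ p * (2*I) ^ q)) *
          (u ^ (2 * (i:ℤ) - p) * u ^ (2 * (j:ℤ) - q) * (u ^ a)⁻¹) := by ring
      _ = _ := by rw [hz]
  rw [sum_congr rfl key, Finset.sum_comm]
  apply Finset.sum_eq_zero
  intro i hi
  rw [Finset.sum_comm]
  apply Finset.sum_eq_zero
  intro j hj
  rw [← Finset.mul_sum, sum_om_zpow a ha _ ?_ ?_, mul_zero]
  · have hip : (i:ℤ) ≤ p := by exact_mod_cast Nat.lt_succ_iff.1 (mem_range.1 hi)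
    have hjq : (j:ℤ) ≤ q := by exact_mod_cast Nat.lt_succ_iff.1 (mem_range.1 hj)
    have : (p:ℤ) + q < a := by exact_mod_cast hpq
    omega
  · have hip : (i:ℤ) ≤ p := by exact_mod_cast Nat.lt_succ_iff.1 (mem_range.1 hi)
    have hjq : (j:ℤ) ≤ q := by exact_mod_cast Nat.lt_succ_iff.1 (mem_range.1 hj)
    have : (p:ℤ) + q < a := by exact_mod_cast hpq
    omega

noncomputable def xt (a : ℕ) (ξ : ℂ → ℂ) : ℂ → ℂ :=
  fun z => ∑ k ∈ range (2 * a), ((om a ^ k) ^ a)⁻¹ * ξ (om a ^ k * z)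

lemma xt_contDiff (a : ℕ) (ξ : ℂ → ℂ) (hξ : ContDiff ℝ (⊤ : ℕ∞) ξ) : ContDiff ℝ (⊤ : ℕ∞) (xt a ξ) := by
  apply ContDiff.sum
  intro k _
  exact contDiff_const.mul (hξ.comp (contDiff_const.mul contDiff_id))

-- product of ite over Fin m
lemma prod_ite_card {m : ℕ} (S : Finset (Fin m)) (r s : ℝ) :
    ∏ i : Fin m, (if i ∈ S then r else s) = r ^ S.card * s ^ Sᶜ.card := by
  rw [Finset.prod_ite]
  have h1 : Finset.filter (fun x => x ∈ S) Finset.univ = S := by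
    ext x; simp
  have h2 : Finset.filter (fun x => x ∉ S) Finset.univ = Sᶜ := by
    ext x; simp
  rw [h1, h2, Finset.prod_const, Finset.prod_const]

lemma xt_vanish (a : ℕ) (ha : 0 < a) (ξ : ℂ → ℂ) (hξ : ContDiff ℝ (⊤ : ℕ∞) ξ)
    (m : ℕ) (hm : m < a) : iteratedFDeriv ℝ m (xt a ξ) 0 = 0 := by
  have hterm : ∀ k ∈ range (2 * a), ContDiff ℝ (m : ℕ∞)
      (fun z => ((om a ^ k) ^ a)⁻¹ * ξ (om a ^ k * z)) := fun k _ =>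
    (contDiff_const.mul (hξ.comp (contDiff_const.mul contDiff_id))).of_le (by exact_mod_cast le_top)
  have hsum : iteratedFDeriv ℝ m (xt a ξ) 0 =
      ∑ k ∈ range (2 * a), iteratedFDeriv ℝ m (fun z => ((om a ^ k) ^ a)⁻¹ * ξ (om a ^ k * z)) 0 := by
    rw [show (xt a ξ) = (∑ k ∈ range (2*a), (fun z => ((om a ^ k) ^ a)⁻¹ * ξ (om a ^ k * z)) ·) from rfl]
    rw [iteratedFDeriv_sum hterm]
    simp
  ext v
  have happ : iteratedFDeriv ℝ m (xt a ξ) 0 v =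
      ∑ k ∈ range (2 * a),
        iteratedFDeriv ℝ m (fun z => ((om a ^ k) ^ a)⁻¹ * ξ (om a ^ k * z)) 0 v := by
    rw [hsum, ContinuousMultilinearMap.sum_apply]
  set T := iteratedFDeriv ℝ m ξ 0 with hT
  have hk : ∀ k : ℕ, iteratedFDeriv ℝ m (fun z => ((om a ^ k) ^ a)⁻¹ * ξ (om a ^ k * z)) 0 v
      = ((om a ^ k) ^ a)⁻¹ * T (fun i => om a ^ k * v i) := by
    intro k
    have e1 : (fun z => ((om a ^ k) ^ a)⁻¹ * ξ (om a ^ k * z)) =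
        (ContinuousLinearMap.mul ℝ ℂ (((om a ^ k) ^ a)⁻¹)) ∘
          (ξ ∘ (ContinuousLinearMap.mul ℝ ℂ (om a ^ k))) := rfl
    rw [e1, ContinuousLinearMap.iteratedFDeriv_comp_left _
      (hξ.comp (ContinuousLinearMap.mul ℝ ℂ (om a ^ k)).contDiff).contDiffAt (by exact_mod_cast le_top)]
    rw [ContinuousLinearMap.compContinuousMultilinearMap_coe]
    simp only [Function.comp_apply]
    rw [ContinuousLinearMap.iteratedFDeriv_comp_right _ hξ _ (by exact_mod_cast le_top)]
    simp [ContinuousLinearMap.mul_apply', hT]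
  have hexp : ∀ w : ℂ, T (fun i => w * v i) =
      ∑ S : Finset (Fin m), (w.re ^ S.card * w.im ^ Sᶜ.card) •
        T (S.piecewise v (fun i => I * v i)) := by
    intro w
    have h1 : (fun i : Fin m => w * v i) =
        (fun i => w.re • v i) + (fun i => w.im • (I * v i)) := by
      funext i
      simp only [Pi.add_apply, Complex.real_smul]
      linear_combination -(v i) * Complex.re_add_im w
    have h2 := T.toMultilinearMap.map_add_univ (fun i => w.re • v i) (fun i => w.im • (I * v i))
    rw [h1]
    rw [show (T ((fun i => w.re • v i) + fun i => w.im • (I * v i)))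
      = T.toMultilinearMap ((fun i => w.re • v i) + fun i => w.im • (I * v i)) from rfl, h2]
    apply sum_congr rfl
    intro S _
    have h3 : S.piecewise (fun i => w.re • v i) (fun i => w.im • (I * v i)) =
        fun i => (if i ∈ S then w.re else w.im) • (S.piecewise v (fun i => I * v i) i) := by
      funext i
      by_cases h : i ∈ S <;> simp [Finset.piecewise, h]
    rw [h3]
    have h4 := T.toMultilinearMap.map_smul_univ (fun i => if i ∈ S then w.re else w.im)
      (S.piecewise v (fun i => I * v i))
    rw [h4, prod_ite_card]
    rfl
  rw [happ]
  have : ∀ k ∈ range (2 * a),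
      iteratedFDeriv ℝ m (fun z => ((om a ^ k) ^ a)⁻¹ * ξ (om a ^ k * z)) 0 v
      = ∑ S : Finset (Fin m),
          (((om a ^ k) ^ a)⁻¹ * ((om a ^ k).re : ℂ) ^ S.card * ((om a ^ k).im : ℂ) ^ Sᶜ.card) *
            T (S.piecewise v (fun i => I * v i)) := by
    intro k _
    rw [hk k, hexp (om a ^ k), Finset.mul_sum]
    apply sum_congr rfl
    intro S _
    rw [Complex.real_smul]
    push_cast
    ring
  rw [sum_congr rfl this, Finset.sum_comm]
  rw [ContinuousMultilinearMap.zero_apply]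
  apply Finset.sum_eq_zero
  intro S _
  rw [← Finset.sum_mul]
  have hcard : S.card + Sᶜ.card = m := by
    rw [Finset.card_add_card_compl]
    simp
  rw [scalar_vanish a S.card Sᶜ.card ha (by omega), zero_mul]

theorem taylor_bound : ∀ (n : ℕ) {F : Type} [NormedAddCommGroup F] [NormedSpace ℝ F]
    (g : ℂ → F), ContDiff ℝ (⊤ : ℕ∞) g → (∀ m, m < n → iteratedFDeriv ℝ m g 0 = 0) →
    ∃ C : ℝ, ∀ z : ℂ, ‖z‖ ≤ 1 → ‖g z‖ ≤ C * ‖z‖ ^ n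
  | 0, F, _, _, g, hg, _ => by
    obtain ⟨C, hC⟩ := (isCompact_closedBall (0:ℂ) 1).exists_bound_of_continuousOn
      hg.continuous.continuousOn
    exact ⟨C, fun z hz => by simpa using hC z (by simpa [Metric.mem_closedBall, dist_eq_norm] using hz)⟩
  | (n+1), F, _, _, g, hg, hv => by
    have hg' : ContDiff ℝ (⊤ : ℕ∞) (fderiv ℝ g) := hg.fderiv_right (by simp)
    have hv' : ∀ m, m < n → iteratedFDeriv ℝ m (fderiv ℝ g) 0 = 0 := by
      intro m hm
      ext v w
      have h0 := hv (m+1) (by omega)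
      have h1 := iteratedFDeriv_succ_apply_right (𝕜 := ℝ) (f := g) (x := (0:ℂ)) (n := m)
        (Fin.snoc v w)
      rw [h0] at h1
      simpa using h1.symm
    obtain ⟨C, hC⟩ := taylor_bound n (fderiv ℝ g) hg' hv'
    refine ⟨max C 0, fun z hz => ?_⟩
    have hg0 : g 0 = 0 := by
      have := hv 0 (Nat.succ_pos n)
      have h2 : iteratedFDeriv ℝ 0 g 0 (fun _ => 0) = g 0 := iteratedFDeriv_zero_apply _
      rw [this] at h2
      simpa using h2.symm
    have key : ‖g z - g 0‖ ≤ (max C 0 * ‖z‖ ^ n) * ‖z - 0‖ := by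
      apply (convex_closedBall (0:ℂ) ‖z‖).norm_image_sub_le_of_norm_fderiv_le
        (fun x _ => hg.differentiable (by simp) x) ?_ (Metric.mem_closedBall_self (norm_nonneg z)) ?_
      · intro x hx
        have hx1 : ‖x‖ ≤ ‖z‖ := by simpa [Metric.mem_closedBall, dist_eq_norm] using hx
        calc ‖fderiv ℝ g x‖ ≤ C * ‖x‖ ^ n := hC x (hx1.trans hz)
          _ ≤ max C 0 * ‖z‖ ^ n := by
              apply mul_le_mul (le_max_left _ _) (pow_le_pow_left₀ (norm_nonneg _) hx1 n)
                (pow_nonneg (norm_nonneg _) n) (le_max_right _ _)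
      · simp [Metric.mem_closedBall, dist_eq_norm]
    rw [hg0, sub_zero, sub_zero] at key
    calc ‖g z‖ ≤ max C 0 * ‖z‖ ^ n * ‖z‖ := key
      _ = max C 0 * ‖z‖ ^ (n+1) := by ring

lemma integrableOn_aux (g : ℂ → ℂ) (hg : Continuous g) (R : ℝ)
    (hgR : ∀ z : ℂ, R < ‖z‖ → g z = 0) (a : ℕ) {ε : ℝ} (hε : 0 < ε) :
    IntegrableOn (fun z => g z / z ^ a) {z : ℂ | ε < ‖z‖} volume := by
  obtain ⟨M, hM⟩ := (isCompact_closedBall (0:ℂ) R).exists_bound_of_continuousOn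
    hg.continuousOn
  have hMg : ∀ z : ℂ, ‖g z‖ ≤ max M 0 := by
    intro z
    rcases le_or_gt ‖z‖ R with h | h
    · exact (hM z (by simpa [Metric.mem_closedBall, dist_eq_norm] using h)).trans (le_max_left _ _)
    · simp [hgR z h, le_max_right]
  have hmeas : Measurable (fun z : ℂ => g z / z ^ a) :=
    hg.measurable.div ((measurable_id.pow_const a))
  have hset : MeasurableSet {z : ℂ | ε < ‖z‖} :=
    (isOpen_lt continuous_const continuous_norm).measurableSet
  have hsub : {z : ℂ | ε < ‖z‖} ⊆ (Metric.closedBall (0:ℂ) R ∩ {z : ℂ | ε < ‖z‖}) ∪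
      {z : ℂ | R < ‖z‖} := by
    intro z hz
    rcases le_or_gt ‖z‖ R with h | h
    · exact Or.inl ⟨by simpa [Metric.mem_closedBall, dist_eq_norm] using h, hz⟩
    · exact Or.inr h
  apply IntegrableOn.mono_set _ hsub
  apply IntegrableOn.union
  · apply Measure.integrableOn_of_bounded (M := (max M 0) / ε ^ a)
    · exact ne_of_lt (lt_of_le_of_lt (measure_mono Set.inter_subset_left)
        (measure_closedBall_lt_top))
    · exact hmeas.aestronglyMeasurable
    · filter_upwards [ae_restrict_mem ((measurableSet_closedBall).inter hset)] with z hz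
      have hz1 : ε < ‖z‖ := hz.2
      rw [norm_div, norm_pow]
      exact div_le_div₀ (le_max_right M 0) (hMg z) (pow_pos hε a)
        (pow_le_pow_left₀ hε.le hz1.le a)
  · apply IntegrableOn.congr_fun (integrableOn_zero)
    · intro z hz; exact (hgR z hz).symm ▸ by simp [hgR z hz]
    · exact (isOpen_lt continuous_const continuous_norm).measurableSet

lemma setIntegral_rot (f : ℂ → ℂ) (c : ℂ) (hc : ‖c‖ = 1) (ε : ℝ) :
    ∫ z in {z : ℂ | ε < ‖z‖}, f (c * z) = ∫ z in {z : ℂ | ε < ‖z‖}, f z := by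
  have hmem : c ∈ Submonoid.unitSphere ℂ := by
    simp [Submonoid.unitSphere, mem_sphere_zero_iff_norm, hc]
  set u : Circle := ⟨c, hmem⟩
  set e : ℂ ≃ₗᵢ[ℝ] ℂ := rotation u
  have hez : ∀ z : ℂ, e z = c * z := fun z => rotation_apply u z
  have hpre : e ⁻¹' {z : ℂ | ε < ‖z‖} = {z : ℂ | ε < ‖z‖} := by
    ext z
    simp only [Set.mem_preimage, Set.mem_setOf_eq, hez z, norm_mul,
      hc, one_mul]
  have key := (e.measurePreserving).setIntegral_preimage_emb
    (e.toHomeomorph.measurableEmbedding) f {z : ℂ | ε < ‖z‖}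
  rw [hpre] at key
  rw [← key]
  apply setIntegral_congr_fun ((isOpen_lt continuous_const continuous_norm).measurableSet)
  intro z _
  show f (c * z) = f (e z)
  rw [hez z]


-- global bound for continuous function vanishing outside a ball
lemma global_bound (g : ℂ → ℂ) (hg : Continuous g) (R : ℝ)
    (hgR : ∀ z : ℂ, R < ‖z‖ → g z = 0) : ∃ M : ℝ, 0 ≤ M ∧ ∀ z : ℂ, ‖g z‖ ≤ M := by
  obtain ⟨M, hM⟩ := (isCompact_closedBall (0:ℂ) R).exists_bound_of_continuousOn hg.continuousOn
  refine ⟨max M 0, le_max_right _ _, fun z => ?_⟩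
  rcases le_or_gt ‖z‖ R with h | h
  · exact (hM z (by simpa [Metric.mem_closedBall, dist_eq_norm] using h)).trans (le_max_left _ _)
  · simp [hgR z h, le_max_right]

/-- Definition 5.2, simplest case `f(z) = z` on `ℂ`: the principal value current
`[1/f^a]` is well defined, i.e. the limit `lim_{ε→0⁺} ∫_{|z|>ε} ξ(z)/z^a` exists
for every smooth compactly supported test function `ξ`. -/
theorem stmt_13 (a : ℕ) (ha : 0 < a) (ξ : ℂ → ℂ)
    (hξ : ContDiff ℝ (⊤ : ℕ∞) ξ) (hsupp : HasCompactSupport ξ) :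
    ∃ L : ℂ, Tendsto (fun ε : ℝ => ∫ z in {z : ℂ | ε < ‖z‖}, ξ z / z ^ a)
      (nhdsWithin 0 (Set.Ioi 0)) (nhds L) := by
  -- support radius
  obtain ⟨R, hR⟩ := hsupp.isBounded.subset_closedBall 0
  have hξR : ∀ z : ℂ, R < ‖z‖ → ξ z = 0 := by
    intro z hz
    apply image_eq_zero_of_notMem_tsupport
    intro hmem
    have := hR hmem
    rw [Metric.mem_closedBall, dist_zero_right] at this
    linarith
  have hxtR : ∀ z : ℂ, R < ‖z‖ → xt a ξ z = 0 := by
    intro z hz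
    rw [xt]
    apply Finset.sum_eq_zero
    intro k _
    have : ξ (om a ^ k * z) = 0 := by
      apply hξR
      rwa [norm_mul, om_abs a ha k, one_mul]
    rw [this, mul_zero]
  have hxtc : Continuous (xt a ξ) := (xt_contDiff a ξ hξ).continuous
  have hset : ∀ ε : ℝ, MeasurableSet {z : ℂ | ε < ‖z‖} :=
    fun ε => (isOpen_lt continuous_const continuous_norm).measurableSet
  set h : ℂ → ℂ := fun z => xt a ξ z / z ^ a with hh
  have hNne : ((2 * a : ℕ) : ℂ) ≠ 0 := by
    simp; omega
  -- Step A : for each positive ε, the two set integrals are related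
  have stepA : ∀ ε : ℝ, 0 < ε →
      ∫ z in {z : ℂ | ε < ‖z‖}, ξ z / z ^ a
        = ((2 * a : ℕ) : ℂ)⁻¹ * ∫ z in {z : ℂ | ε < ‖z‖}, h z := by
    intro ε hε
    have hint : ∀ k : ℕ, IntegrableOn
        (fun z => (((om a ^ k) ^ a)⁻¹ * ξ (om a ^ k * z)) / z ^ a) {z : ℂ | ε < ‖z‖} volume := by
      intro k
      apply integrableOn_aux (fun z => (((om a ^ k) ^ a)⁻¹ * ξ (om a ^ k * z)))
        (continuous_const.mul (hξ.continuous.comp (continuous_const.mul continuous_id))) R ?_ a hε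
      intro z hz
      have : ξ (om a ^ k * z) = 0 := by
        apply hξR
        rwa [norm_mul, om_abs a ha k, one_mul]
      simp only [this, mul_zero]
    have e1 : ∫ z in {z : ℂ | ε < ‖z‖}, h z
        = ∑ k ∈ range (2 * a), ∫ z in {z : ℂ | ε < ‖z‖},
            (((om a ^ k) ^ a)⁻¹ * ξ (om a ^ k * z)) / z ^ a := by
      rw [← integral_finset_sum _ (fun k _ => hint k)]
      apply setIntegral_congr_fun (hset ε)
      intro z _
      simp only [hh, xt, Finset.sum_div]
    have e2 : ∀ k ∈ range (2 * a), ∫ z in {z : ℂ | ε < ‖z‖},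
        (((om a ^ k) ^ a)⁻¹ * ξ (om a ^ k * z)) / z ^ a
        = ∫ z in {z : ℂ | ε < ‖z‖}, ξ z / z ^ a := by
      intro k _
      have hc : ((om a ^ k) ^ a) ≠ 0 := pow_ne_zero _ (pow_ne_zero _ (om_ne_zero a))
      have hpt : ∀ z : ℂ, (((om a ^ k) ^ a)⁻¹ * ξ (om a ^ k * z)) / z ^ a
          = ((om a ^ k) ^ a)⁻¹ * ((fun w => ((om a ^ k) ^ a) * (ξ w / w ^ a)) (om a ^ k * z)) := by
        intro z
        simp only
        rw [mul_pow]
        rw [div_mul_eq_div_div_swap, mul_div_assoc]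
        field_simp
      calc ∫ z in {z : ℂ | ε < ‖z‖}, (((om a ^ k) ^ a)⁻¹ * ξ (om a ^ k * z)) / z ^ a
          = ∫ z in {z : ℂ | ε < ‖z‖}, ((om a ^ k) ^ a)⁻¹ *
              ((fun w => ((om a ^ k) ^ a) * (ξ w / w ^ a)) (om a ^ k * z)) := by
            apply setIntegral_congr_fun (hset ε); intro z _; exact hpt z
        _ = ((om a ^ k) ^ a)⁻¹ * ∫ z in {z : ℂ | ε < ‖z‖},
              ((fun w => ((om a ^ k) ^ a) * (ξ w / w ^ a)) (om a ^ k * z)) := by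
            rw [integral_const_mul]
        _ = ((om a ^ k) ^ a)⁻¹ * ∫ w in {z : ℂ | ε < ‖z‖},
              ((om a ^ k) ^ a) * (ξ w / w ^ a) := by
            exact congrArg (fun t => ((om a ^ k) ^ a)⁻¹ * t)
              (setIntegral_rot (fun w => ((om a ^ k) ^ a) * (ξ w / w ^ a))
                (om a ^ k) (om_abs a ha k) ε)
        _ = ∫ z in {z : ℂ | ε < ‖z‖}, ξ z / z ^ a := by
            rw [integral_const_mul, ← mul_assoc, inv_mul_cancel₀ hc, one_mul]
    rw [e1, Finset.sum_congr rfl e2, Finset.sum_const, card_range, nsmul_eq_mul]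
    rw [← mul_assoc, inv_mul_cancel₀ hNne, one_mul]
  -- Step B : global bound for h
  obtain ⟨C, hC⟩ := taylor_bound a (xt a ξ) (xt_contDiff a ξ hξ) (xt_vanish a ha ξ hξ)
  obtain ⟨Mx, hMx0, hMx⟩ := global_bound (xt a ξ) hxtc R hxtR
  set B : ℝ := max (max C 0) Mx with hB
  have hB0 : 0 ≤ B := le_trans hMx0 (le_max_right _ _)
  have hhb : ∀ z : ℂ, ‖h z‖ ≤ B := by
    intro z
    rcases eq_or_ne z 0 with rfl | hz0
    · simp [hh, zero_pow ha.ne']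
      exact hB0
    · have hzpos : 0 < ‖z‖ := norm_pos_iff.2 hz0
      rcases le_or_gt ‖z‖ 1 with h1 | h1
      · have : ‖h z‖ = ‖xt a ξ z‖ / ‖z‖ ^ a := by rw [hh]; simp [norm_div]
        rw [this, div_le_iff₀ (pow_pos hzpos a)]
        calc ‖xt a ξ z‖ ≤ C * ‖z‖ ^ a := hC z h1
          _ ≤ B * ‖z‖ ^ a := by
            apply mul_le_mul_of_nonneg_right _ (pow_nonneg hzpos.le a)
            exact le_trans (le_max_left C 0) (le_max_left _ _)
      · have : ‖h z‖ = ‖xt a ξ z‖ / ‖z‖ ^ a := by rw [hh]; simp [norm_div]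
        rw [this]
        calc ‖xt a ξ z‖ / ‖z‖ ^ a ≤ ‖xt a ξ z‖ := by
              apply div_le_self (norm_nonneg _)
              exact one_le_pow₀ h1.le
          _ ≤ B := (hMx z).trans (le_max_right _ _)
  -- integrability of h
  have hmeas_h : AEStronglyMeasurable h volume :=
    (hxtc.measurable.div (measurable_id.pow_const a)).aestronglyMeasurable
  have hsupp_h : Function.support h ⊆ Metric.closedBall 0 (max R 1) := by
    intro z hz
    simp only [Function.mem_support, hh] at hz
    by_contra hmem
    have hlt : max R 1 < ‖z‖ := by
      simpa [Metric.mem_closedBall, dist_zero_right, not_le] using hmem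
    exact hz (by rw [hxtR z (lt_of_le_of_lt (le_max_left R 1) hlt)]; simp)
  have hint_h : Integrable h volume := by
    have hio : IntegrableOn h (Metric.closedBall 0 (max R 1)) volume := by
      apply Measure.integrableOn_of_bounded (M := B)
      · exact measure_closedBall_lt_top.ne
      · exact hmeas_h
      · exact Eventually.of_forall (fun z => hhb z)
    exact (integrableOn_iff_integrable_of_support_subset hsupp_h).mp hio
  have hcompl : ∀ ε : ℝ, {z : ℂ | ε < ‖z‖}ᶜ = Metric.closedBall (0:ℂ) ε := by
    intro ε; ext z; simp [Metric.mem_closedBall, dist_zero_right, not_lt]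
  have hdiff : ∀ ε : ℝ, 0 < ε →
      ‖(∫ z in {z : ℂ | ε < ‖z‖}, h z) - ∫ z, h z‖ ≤ B * (ε ^ 2 * Real.pi) := by
    intro ε hε
    have hsplit := integral_add_compl (hset ε) hint_h
    have hdec : (∫ z in {z : ℂ | ε < ‖z‖}, h z) - ∫ z, h z
        = -(∫ z in {z : ℂ | ε < ‖z‖}ᶜ, h z) := by
      rw [← hsplit]; ring
    rw [hdec, norm_neg, hcompl ε]
    have hb := norm_setIntegral_le_of_norm_le_const (μ := volume)
      (s := Metric.closedBall (0:ℂ) ε) (C := B) measure_closedBall_lt_top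
      (fun z _ => hhb z)
    have hvol : (volume (Metric.closedBall (0:ℂ) ε)).toReal = ε ^ 2 * Real.pi := by
      rw [Complex.volume_closedBall]
      simp [ENNReal.toReal_mul, ENNReal.toReal_pow, ENNReal.toReal_ofReal hε.le]
    rw [measureReal_def, hvol] at hb
    exact hb
  have htend0 : Tendsto (fun ε : ℝ => B * (ε ^ 2 * Real.pi)) (nhdsWithin (0:ℝ) (Set.Ioi 0)) (nhds 0) := by
    have hc : Tendsto (fun ε : ℝ => B * (ε ^ 2 * Real.pi)) (nhds 0) (nhds (B * (0 ^ 2 * Real.pi))) := by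
      apply Continuous.tendsto
      fun_prop
    simpa using hc.mono_left nhdsWithin_le_nhds
  have hmain : Tendsto (fun ε : ℝ => ∫ z in {z : ℂ | ε < ‖z‖}, h z) (nhdsWithin (0:ℝ) (Set.Ioi 0))
      (nhds (∫ z, h z)) := by
    rw [← tendsto_sub_nhds_zero_iff]
    apply squeeze_zero_norm' ?_ htend0
    filter_upwards [self_mem_nhdsWithin] with ε hε
    exact hdiff ε hε
  refine ⟨((2 * a : ℕ) : ℂ)⁻¹ * ∫ z, h z, ?_⟩
  apply Tendsto.congr' ?_ (hmain.const_mul (((2 * a : ℕ) : ℂ)⁻¹))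
  filter_upwards [self_mem_nhdsWithin] with ε hε
  exact (stepA ε hε).symm
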